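/- In the Clifford Hayden–Preskill problem, for any Pauli operator Q_D on D, the probability of obtaining outcome |Q_D⟩ := (Q_D ⊗ I)|EPR⟩_{D\overline{D}} in the generalized Bell measurement on D \overline{D} equals N_{Q_D}/d_A^2, where N_{Q_D} is the number of Pauli operators P_A on A such that Λ_D(P_A) = Q_D (as projective Pauli operators). -/

import Mathlib

open Matrix Kronecker BigOperators

/-- The `n`-qubit Pauli operator `X^x Z^z` (symplectic representation). -/
noncomputable def pauli {n : ℕ} (x z : Fin n → ZMod 2) :
    Matrix (Fin n → ZMod 2) (Fin n → ZMod 2) ℂ :=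
  fun j k => if j = k + x then ((-1 : ℂ)) ^ (∑ i, (z i * k i).val) else 0

/-- The Yoshida–Kitaev doubled Hayden–Preskill state
`|Ψ'⟩ = (I_R ⊗ U_{AB} ⊗ Ū_{B̄A'} ⊗ I_{R̄})(|EPR⟩_{RA}|EPR⟩_{BB̄}|EPR⟩_{A'R̄})`,
with registers `(R, (C,D), (D̄,C̄), R̄)`; componentwise
`Ψ'(r,(c,d),(d̄,c̄),r̄) = (1/(d_A √d_B)) ∑_b U_{(c,d),(r,b)} conj U_{(c̄,d̄),(r̄,b)}`. -/
noncomputable def psiYK (nA nB nC nD : ℕ)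
    (U : Matrix ((Fin nC → ZMod 2) × (Fin nD → ZMod 2))
      ((Fin nA → ZMod 2) × (Fin nB → ZMod 2)) ℂ)
    (r : Fin nA → ZMod 2) (cd : (Fin nC → ZMod 2) × (Fin nD → ZMod 2))
    (dc : (Fin nD → ZMod 2) × (Fin nC → ZMod 2)) (rb : Fin nA → ZMod 2) : ℂ :=
  ((2 ^ nA : ℂ) * (Real.sqrt (2 ^ nB) : ℂ))⁻¹ *
    ∑ b : Fin nB → ZMod 2,
      U cd (r, b) * (starRingEnd ℂ) (U (dc.2, dc.1) (rb, b))

/-!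
For fixed outputs `c, c̄` on `C`, the amplitude of the outcome `|Q_D⟩` at `(r, r̄)` is, up to
normalisation, the value on the matrix unit `E_{r r̄}` of the linear functional
`M ↦ ∑_{d,d̄} (Q_D)_{d d̄} (U (M ⊗ 1) U†)_{(c,d),(c̄,d̄)}`. The Paulis `P_A / √d_A` form an
orthonormal basis of the matrices on `A`, so by Parseval the sum over `r, r̄` of the squared
amplitudes is `d_A⁻¹` times the sum over all `P_A` of the squared values on `P_A`. For a Clifford
`U` the value on `P_A` is `c · (P_C)_{c c̄} · ⟨Λ_D(P_A), Q_D⟩`, and Pauli orthogonality makes the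
last factor `d_D` or `0` according to whether `Λ_D(P_A) = Q_D`. Summing `|(P_C)_{c c̄}|²` over
`c, c̄` gives `d_C`, and `d_C d_D = d_A d_B` turns the total into `N_{Q_D} / d_A²`.
-/
noncomputable def signChar : AddChar (ZMod 2) ℂ :=
  AddChar.zmodChar 2 (ζ := -1) (by norm_num)

lemma signChar_natCast (m : ℕ) : signChar m = (-1) ^ m :=
  AddChar.zmodChar_apply' _ m

lemma conj_signChar (a : ZMod 2) : starRingEnd ℂ (signChar a) = signChar a := by
  simp [signChar, AddChar.zmodChar_apply]

lemma signChar_one : signChar 1 = -1 := by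
  simpa using signChar_natCast 1

lemma sum_signChar_dotProduct {n : ℕ} (v : Fin n → ZMod 2) :
    ∑ z : Fin n → ZMod 2, signChar (z ⬝ᵥ v) = if v = 0 then (2 ^ n : ℂ) else 0 := by
  classical
  let ψ : AddChar (Fin n → ZMod 2) ℂ :=
    signChar.compAddMonoidHom (AddMonoidHom.mk' (· ⬝ᵥ v) fun a b => add_dotProduct a b v)
  have hψ : ψ = 0 ↔ v = 0 := by
    refine ⟨fun h => funext fun i => ?_, fun h => AddChar.eq_zero_iff.2 fun z => by simp [ψ, h]⟩
    have := AddChar.eq_zero_iff.1 h (Pi.single i 1)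
    simp only [ψ, AddChar.compAddMonoidHom_apply, AddMonoidHom.mk'_apply, single_dotProduct,
      one_mul] at this
    rcases (by decide : ∀ a : ZMod 2, a = 0 ∨ a = 1) (v i) with h0 | h1
    · exact h0
    · rw [h1, signChar_one] at this
      norm_num at this
  have := AddChar.sum_eq_ite ψ
  simp only [hψ] at this
  simpa [ψ] using this

lemma pauli_apply {n : ℕ} (x z j k : Fin n → ZMod 2) :
    pauli x z j k = if j = k + x then signChar (z ⬝ᵥ k) else 0 := by
  simp only [pauli, ← signChar_natCast, Nat.cast_sum, ZMod.natCast_zmod_val, dotProduct]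

lemma conj_pauli_apply {n : ℕ} (x z j k : Fin n → ZMod 2) :
    starRingEnd ℂ (pauli x z j k) = pauli x z j k := by
  rw [pauli_apply]; split_ifs <;> simp [conj_signChar]

lemma pi_neg_eq_self_mod_two {n : ℕ} (v : Fin n → ZMod 2) : -v = v :=
  funext fun i => ZMod.neg_eq_self_mod_two (v i)

lemma sum_pauli_mul_pauli {n : ℕ} (x z x' z' : Fin n → ZMod 2) :
    ∑ j, ∑ k, pauli x z j k * pauli x' z' j k
      = if x = x' ∧ z = z' then (2 ^ n : ℂ) else 0 := by
  rw [Finset.sum_comm]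
  simp only [pauli_apply, ite_mul, zero_mul, mul_ite, mul_zero, Finset.sum_ite_eq',
    Finset.mem_univ, if_true, add_right_inj, ← AddChar.map_add_eq_mul]
  by_cases hx : x' = x
  · simp only [hx, if_true, true_and, ← add_dotProduct, dotProduct_comm (z + z'),
      sum_signChar_dotProduct, add_eq_zero_iff_eq_neg, pi_neg_eq_self_mod_two]
  · simp [hx, Ne.symm hx]

lemma sum_normSq_pauli_apply {n : ℕ} (x z : Fin n → ZMod 2) :
    ∑ j, ∑ k, Complex.normSq (pauli x z j k) = 2 ^ n := by
  apply Complex.ofReal_injective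
  push_cast
  simpa [Complex.normSq_eq_conj_mul_self, conj_pauli_apply] using sum_pauli_mul_pauli x z x z

lemma sum_pauli_mul_pauli_over_labels {n : ℕ} (j k j' k' : Fin n → ZMod 2) :
    ∑ x, ∑ z, pauli x z j k * pauli x z j' k'
      = if j = j' ∧ k = k' then (2 ^ n : ℂ) else 0 := by
  simp only [pauli_apply, ite_mul, zero_mul, mul_ite, mul_zero]
  have hx : ∀ x, j' = k' + x ↔ x = j' - k' := fun x => by
    rw [eq_sub_iff_add_eq, add_comm, eq_comm]
  simp only [hx, Finset.sum_ite_irrel, Finset.sum_const_zero, Finset.sum_ite_eq',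
    Finset.mem_univ, if_true, ← AddChar.map_add_eq_mul, ← dotProduct_add]
  by_cases hj : j = k + (j' - k')
  · simp only [hj, if_true, sum_signChar_dotProduct, add_eq_zero_iff_eq_neg,
      pi_neg_eq_self_mod_two]
    by_cases hk : k = k' <;> simp [hk]
  · rw [if_neg hj, if_neg]
    rintro ⟨rfl, rfl⟩
    simp at hj

lemma sum_normSq_sum_mul_of_orthogonal {ι κ : Type*} [Fintype ι] [Fintype κ] [DecidableEq ι]
    (M : κ → ι → ℂ) (c : ℝ)
    (hM : ∀ p p', ∑ q, M q p * starRingEnd ℂ (M q p') = if p = p' then (c : ℂ) else 0)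
    (a : ι → ℂ) :
    ∑ q, Complex.normSq (∑ p, a p * M q p) = c * ∑ p, Complex.normSq (a p) := by
  apply Complex.ofReal_injective
  push_cast
  simp only [← Complex.mul_conj, map_sum, map_mul, Finset.sum_mul_sum]
  calc ∑ q, ∑ p, ∑ p', a p * M q p * (starRingEnd ℂ (a p') * starRingEnd ℂ (M q p'))
      = ∑ p, ∑ p', a p * starRingEnd ℂ (a p') * ∑ q, M q p * starRingEnd ℂ (M q p') := by
        rw [Finset.sum_comm]
        refine Finset.sum_congr rfl fun p _ => ?_
        rw [Finset.sum_comm]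
        simp only [Finset.mul_sum]
        exact Finset.sum_congr rfl fun p' _ => Finset.sum_congr rfl fun q _ => by ring
    _ = c * ∑ p, a p * starRingEnd ℂ (a p) := by
        simp [hM, Finset.mul_sum, mul_comm]

lemma sum_normSq_sum_mul_pauli {n : ℕ} (f : (Fin n → ZMod 2) → (Fin n → ZMod 2) → ℂ) :
    ∑ x, ∑ z, Complex.normSq (∑ j, ∑ k, f j k * pauli x z j k)
      = 2 ^ n * ∑ j, ∑ k, Complex.normSq (f j k) := by
  have h := sum_normSq_sum_mul_of_orthogonal
    (fun q p : (Fin n → ZMod 2) × (Fin n → ZMod 2) => pauli q.1 q.2 p.1 p.2) (2 ^ n)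
    (fun p p' => by
      simpa [conj_pauli_apply, Fintype.sum_prod_type, Prod.ext_iff]
        using sum_pauli_mul_pauli_over_labels p.1 p.2 p'.1 p'.2)
    (fun p : (Fin n → ZMod 2) × (Fin n → ZMod 2) => f p.1 p.2)
  simpa only [Fintype.sum_prod_type] using h

lemma mul_kronecker_one_mul_conjTranspose_apply {α β γ : Type*} [Fintype α] [Fintype β]
    [DecidableEq β] (U : Matrix γ (α × β) ℂ) (M : Matrix α α ℂ) (i i' : γ) :
    (U * (M ⊗ₖ (1 : Matrix β β ℂ)) * Uᴴ) i i'
      = ∑ a, ∑ a', M a a' * ∑ b, U i (a, b) * starRingEnd ℂ (U i' (a', b)) := by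
  simp only [Matrix.mul_apply, Matrix.conjTranspose_apply, Complex.star_def,
    Matrix.kroneckerMap_apply, Matrix.one_apply, Fintype.sum_prod_type, mul_ite, mul_one,
    mul_zero, Finset.sum_ite_eq', Finset.mem_univ, if_true, Finset.sum_mul, Finset.mul_sum]
  conv_lhs => enter [2, a']; rw [Finset.sum_comm]
  rw [Finset.sum_comm]
  exact Finset.sum_congr rfl fun a _ => Finset.sum_congr rfl fun a' _ =>
    Finset.sum_congr rfl fun b _ => by ring

/-- `bellOverlap U Q c c̄ a a'` pairs `Q` on `D D̄` with the `(c, c̄)` block of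
`U (E_{a a'} ⊗ 1) U†`: the unnormalised amplitude of the Bell outcome `|Q⟩`. -/
noncomputable def bellOverlap {nA nC nD : ℕ} {β : Type*} [Fintype β]
    (U : Matrix ((Fin nC → ZMod 2) × (Fin nD → ZMod 2)) ((Fin nA → ZMod 2) × β) ℂ)
    (xq zq : Fin nD → ZMod 2) (cc cb : Fin nC → ZMod 2) (a a' : Fin nA → ZMod 2) : ℂ :=
  ∑ d, ∑ db, pauli xq zq d db * ∑ b, U (cc, d) (a, b) * starRingEnd ℂ (U (cb, db) (a', b))

lemma sum_bellOverlap_mul_pauli {nA nC nD : ℕ} {β : Type*} [Fintype β] [DecidableEq β]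
    (U : Matrix ((Fin nC → ZMod 2) × (Fin nD → ZMod 2)) ((Fin nA → ZMod 2) × β) ℂ)
    (x z : Fin nA → ZMod 2) (c : ℂ) (xc zc : Fin nC → ZMod 2) (xd zd : Fin nD → ZMod 2)
    (hU : U * (pauli x z ⊗ₖ (1 : Matrix β β ℂ)) * Uᴴ = c • (pauli xc zc ⊗ₖ pauli xd zd))
    (xq zq : Fin nD → ZMod 2) (cc cb : Fin nC → ZMod 2) :
    ∑ a, ∑ a', bellOverlap U xq zq cc cb a a' * pauli x z a a'
      = c * pauli xc zc cc cb * if xd = xq ∧ zd = zq then (2 ^ nD : ℂ) else 0 := by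
  calc ∑ a, ∑ a', bellOverlap U xq zq cc cb a a' * pauli x z a a'
      = ∑ a, ∑ a', ∑ d, ∑ db, pauli xq zq d db * (pauli x z a a' *
          ∑ b, U (cc, d) (a, b) * starRingEnd ℂ (U (cb, db) (a', b))) := by
        simp only [bellOverlap, Finset.sum_mul]
        exact Finset.sum_congr rfl fun _ _ => Finset.sum_congr rfl fun _ _ =>
          Finset.sum_congr rfl fun _ _ => Finset.sum_congr rfl fun _ _ => by ring
    _ = ∑ d, ∑ db, pauli xq zq d db *
          (U * (pauli x z ⊗ₖ (1 : Matrix β β ℂ)) * Uᴴ) (cc, d) (cb, db) := by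
        simp only [mul_kronecker_one_mul_conjTranspose_apply, Finset.mul_sum]
        rw [Finset.sum_comm_cycle]
        exact Finset.sum_congr rfl fun _ _ => Finset.sum_comm_cycle
    _ = c * pauli xc zc cc cb * ∑ d, ∑ db, pauli xd zd d db * pauli xq zq d db := by
        simp only [hU, Matrix.smul_apply, Matrix.kroneckerMap_apply, smul_eq_mul, Finset.mul_sum]
        exact Finset.sum_congr rfl fun _ _ => Finset.sum_congr rfl fun _ _ => by ring
    _ = _ := by rw [sum_pauli_mul_pauli]

lemma normSq_amplitude_eq_bellOverlap (nA nB nC nD : ℕ)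
    (U : Matrix ((Fin nC → ZMod 2) × (Fin nD → ZMod 2))
      ((Fin nA → ZMod 2) × (Fin nB → ZMod 2)) ℂ)
    (xq zq : Fin nD → ZMod 2) (r rb : Fin nA → ZMod 2) (cc cb : Fin nC → ZMod 2) :
    Complex.normSq (∑ d, ∑ db,
        starRingEnd ℂ (((Real.sqrt (2 ^ nD) : ℂ))⁻¹ * pauli xq zq d db) *
          psiYK nA nB nC nD U r (cc, d) (db, cb) rb)
      = (2 ^ nD * (2 ^ nA) ^ 2 * 2 ^ nB)⁻¹ * Complex.normSq (bellOverlap U xq zq cc cb r rb) := by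
  have h : ∑ d, ∑ db, starRingEnd ℂ (((Real.sqrt (2 ^ nD) : ℂ))⁻¹ * pauli xq zq d db) *
        psiYK nA nB nC nD U r (cc, d) (db, cb) rb
      = ((Real.sqrt (2 ^ nD))⁻¹ * (2 ^ nA * Real.sqrt (2 ^ nB))⁻¹ : ℝ) *
          bellOverlap U xq zq cc cb r rb := by
    simp only [psiYK, bellOverlap, map_mul, map_inv₀, Complex.conj_ofReal, conj_pauli_apply,
      Finset.mul_sum]
    push_cast
    exact Finset.sum_congr rfl fun _ _ => Finset.sum_congr rfl fun _ _ =>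
      Finset.sum_congr rfl fun _ _ => by ring
  rw [h, Complex.normSq_mul, Complex.normSq_ofReal]
  have hD := Real.sq_sqrt (pow_nonneg zero_le_two nD)
  have hB := Real.sq_sqrt (pow_nonneg zero_le_two nB)
  congr 1
  field_simp
  rw [hD, hB]

lemma card_subtype_eq_sum_sum_ite {α β : Type*} [Fintype α] [Fintype β] (p : α → β → Prop)
    [∀ x z, Decidable (p x z)] [Fintype {q : α × β // p q.1 q.2}] :
    (Fintype.card {q : α × β // p q.1 q.2} : ℝ) = ∑ x, ∑ z, if p x z then 1 else 0 := by
  rw [Fintype.card_subtype, Finset.card_filter, ← Fintype.sum_prod_type']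
  push_cast
  rfl

lemma sum_normSq_bellOverlap {nA nC nD : ℕ} {β : Type*} [Fintype β] [DecidableEq β]
    (U : Matrix ((Fin nC → ZMod 2) × (Fin nD → ZMod 2)) ((Fin nA → ZMod 2) × β) ℂ)
    (c : (Fin nA → ZMod 2) → (Fin nA → ZMod 2) → ℂ)
    (xc zc : (Fin nA → ZMod 2) → (Fin nA → ZMod 2) → (Fin nC → ZMod 2))
    (xd zd : (Fin nA → ZMod 2) → (Fin nA → ZMod 2) → (Fin nD → ZMod 2))
    (hClif : ∀ x z : Fin nA → ZMod 2, ‖c x z‖ = 1 ∧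
      U * (pauli x z ⊗ₖ (1 : Matrix β β ℂ)) * Uᴴ
        = c x z • (pauli (xc x z) (zc x z) ⊗ₖ pauli (xd x z) (zd x z)))
    (xq zq : Fin nD → ZMod 2) :
    ∑ cc, ∑ cb, ∑ r, ∑ rb, Complex.normSq (bellOverlap U xq zq cc cb r rb)
      = 2 ^ nC * (2 ^ nD) ^ 2 / 2 ^ nA *
          ∑ x, ∑ z, if xd x z = xq ∧ zd x z = zq then 1 else 0 := by
  have hcoeff : ∀ x z cc cb,
      Complex.normSq (∑ a, ∑ a', bellOverlap U xq zq cc cb a a' * pauli x z a a')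
        = Complex.normSq (pauli (xc x z) (zc x z) cc cb) *
            ((2 ^ nD) ^ 2 * if xd x z = xq ∧ zd x z = zq then 1 else 0) := by
    intro x z cc cb
    rw [sum_bellOverlap_mul_pauli U x z _ _ _ _ _ (hClif x z).2, Complex.normSq_mul,
      Complex.normSq_mul, Complex.normSq_eq_norm_sq, (hClif x z).1]
    split_ifs <;> simp [sq, mul_pow]
  calc ∑ cc, ∑ cb, ∑ r, ∑ rb, Complex.normSq (bellOverlap U xq zq cc cb r rb)
      = ∑ cc, ∑ cb, (2 ^ nA)⁻¹ * ∑ x, ∑ z, Complex.normSq (pauli (xc x z) (zc x z) cc cb) *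
          ((2 ^ nD) ^ 2 * if xd x z = xq ∧ zd x z = zq then 1 else 0) := by
        simp only [← hcoeff, sum_normSq_sum_mul_pauli]
        field_simp
    _ = (2 ^ nA)⁻¹ * ∑ x, ∑ z, (∑ cc, ∑ cb, Complex.normSq (pauli (xc x z) (zc x z) cc cb)) *
          ((2 ^ nD) ^ 2 * if xd x z = xq ∧ zd x z = zq then 1 else 0) := by
        simp only [← Finset.mul_sum, Finset.sum_mul]
        rw [Finset.sum_comm_cycle]
        exact congrArg _ (Finset.sum_congr rfl fun _ _ => Finset.sum_comm_cycle)
    _ = _ := by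
        simp only [sum_normSq_pauli_apply, ← Finset.mul_sum]
        ring

/-- In the Clifford Hayden–Preskill problem, the probability of the
generalized Bell-measurement outcome `|Q_D⟩ = (Q_D ⊗ I)|EPR⟩_{DD̄}` is
`N_{Q_D}/d_A²`, where `N_{Q_D}` counts Pauli operators `P_A` with
`Λ_D(P_A) = Q_D` (as projective Paulis). -/
theorem stmt10 (nA nB nC nD : ℕ)
    (U : Matrix ((Fin nC → ZMod 2) × (Fin nD → ZMod 2))
      ((Fin nA → ZMod 2) × (Fin nB → ZMod 2)) ℂ)
    (hU1 : U * Uᴴ = 1) (hU2 : Uᴴ * U = 1)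
    (c : (Fin nA → ZMod 2) → (Fin nA → ZMod 2) → ℂ)
    (xc zc : (Fin nA → ZMod 2) → (Fin nA → ZMod 2) → (Fin nC → ZMod 2))
    (xd zd : (Fin nA → ZMod 2) → (Fin nA → ZMod 2) → (Fin nD → ZMod 2))
    (hClif : ∀ x z : Fin nA → ZMod 2, ‖c x z‖ = 1 ∧
      U * (pauli x z ⊗ₖ (1 : Matrix (Fin nB → ZMod 2) (Fin nB → ZMod 2) ℂ)) * Uᴴ
        = c x z • (pauli (xc x z) (zc x z) ⊗ₖ pauli (xd x z) (zd x z)))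
    (xq zq : Fin nD → ZMod 2) :
    (∑ r : Fin nA → ZMod 2, ∑ cc : Fin nC → ZMod 2,
      ∑ cb : Fin nC → ZMod 2, ∑ rb : Fin nA → ZMod 2,
        Complex.normSq (∑ d : Fin nD → ZMod 2, ∑ db : Fin nD → ZMod 2,
          (starRingEnd ℂ) (((Real.sqrt (2 ^ nD) : ℂ))⁻¹ * pauli xq zq d db) *
            psiYK nA nB nC nD U r (cc, d) (db, cb) rb))
      = (Fintype.card {PA : (Fin nA → ZMod 2) × (Fin nA → ZMod 2) //
            xd PA.1 PA.2 = xq ∧ zd PA.1 PA.2 = zq} : ℝ) / (2 ^ nA) ^ 2 := by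
  have hdim : (2 : ℝ) ^ nC = 2 ^ nA * 2 ^ nB / 2 ^ nD := by
    have h := Matrix.square_of_invertible U Uᴴ hU1 hU2
    simp only [Fintype.card_prod, Fintype.card_fun, ZMod.card, Fintype.card_fin] at h
    rw [eq_div_iff (by positivity)]
    exact_mod_cast h
  simp only [normSq_amplitude_eq_bellOverlap, ← Finset.mul_sum]
  rw [← Finset.sum_comm_cycle, sum_normSq_bellOverlap U c xc zc xd zd hClif, hdim]
  field_simp
  exact (card_subtype_eq_sum_sum_ite _).symm
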